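/- arXiv:2206.14694 — 3 statements merged into one kernel-verified Lean document; each statement's English description precedes it below -/
import Mathlib

section
/- For the Bernoulli squirrel random walk with parameter p ∈ (0,1], the mean square displacement satisfies E[X_t²] = ((1-p)/p)·t - ((1-2p)/(2p²))·(1-(1-2p)^t) for all t ≥ 0. -/
/-!
Write `N r = ∑_{k ≤ r} Z k`. Since `σ₀² = 1`, the square expands into `∑_{r,k} (-1)^(N r + N k)`,
and for `r ≤ k` the sign `(-1)^(N r + N k) = (-1)^(N k - N r)` is a product of the independent
signs `(-1)^(Z i)`, `r < i ≤ k`, each of mean `1 - 2p`. Hence `E[X_t²] = ∑_{r,k ≤ t} q^|r-k|`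
with `q = 1 - 2p`, a double geometric sum equal to `t(1+q)/(1-q) - 2q(1-q^t)/(1-q)²`.
-/

open MeasureTheory ProbabilityTheory Finset

section DistanceSums

variable {K : Type*} [Field K]

lemma sum_Icc_pow_dist_add_one (q : K) (hq : q ≠ 1) (t : ℕ) :
    ∑ r ∈ Icc 1 t, q ^ r.dist (t + 1) = q * (1 - q ^ t) / (1 - q) := by
  have h1q : 1 - q ≠ 0 := sub_ne_zero.mpr hq.symm
  induction t with
  | zero => simp
  | succ t ih =>
    have hshift :
        ∑ r ∈ Icc 1 t, q ^ r.dist (t + 1 + 1) = q * ∑ r ∈ Icc 1 t, q ^ r.dist (t + 1) := by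
      rw [mul_sum]
      refine sum_congr rfl fun r hr => ?_
      rw [← pow_succ', Nat.dist_eq_sub_of_le (by grind), Nat.dist_eq_sub_of_le (by grind)]
      congr 1
      grind
    rw [sum_Icc_succ_top (by omega), hshift, ih, Nat.dist_eq_sub_of_le (by omega),
      Nat.add_sub_cancel_left]
    field_simp
    ring

theorem sum_Icc_sum_Icc_pow_dist (q : K) (hq : q ≠ 1) (t : ℕ) :
    ∑ r ∈ Icc 1 t, ∑ k ∈ Icc 1 t, q ^ r.dist k
      = t * (1 + q) / (1 - q) - 2 * q * (1 - q ^ t) / (1 - q) ^ 2 := by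
  have h1q : 1 - q ≠ 0 := sub_ne_zero.mpr hq.symm
  induction t with
  | zero => simp
  | succ t ih =>
    have hcross := sum_Icc_pow_dist_add_one q hq t
    have hcross' : ∑ k ∈ Icc 1 t, q ^ (t + 1).dist k = q * (1 - q ^ t) / (1 - q) := by
      simp_rw [Nat.dist_comm (t + 1)]; exact hcross
    simp only [sum_Icc_succ_top (by omega : 1 ≤ t + 1), sum_add_distrib, ih, hcross, hcross',
      Nat.dist_self]
    push_cast
    field_simp
    ring

end DistanceSums

lemma sum_Icc_one_add_sum_Ioc {M : Type*} [AddCommMonoid M] (f : ℕ → M) {r k : ℕ} (h : r ≤ k) :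
    ∑ i ∈ Icc 1 r, f i + ∑ i ∈ Ioc r k, f i = ∑ i ∈ Icc 1 k, f i := by
  have hIcc : ∀ n, Icc 1 n = Ioc 0 n := Icc_add_one_left_eq_Ioc 0
  rw [hIcc, hIcc, sum_Ioc_consecutive f (Nat.zero_le r) h]

lemma neg_one_pow_add_add_self {M : Type*} [Monoid M] [HasDistribNeg M] (a b : ℕ) :
    (-1 : M) ^ (a + (a + b)) = (-1) ^ b := by
  rw [← add_assoc, pow_add, Even.neg_one_pow ⟨a, rfl⟩, one_mul]

section SignsOfCounts

variable {Ω ι : Type*} [MeasurableSpace Ω] {P : Measure Ω} [IsProbabilityMeasure P]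

lemma integrable_neg_one_pow {X : Ω → ℕ} (hX : Measurable X) :
    Integrable (fun ω => (-1 : ℝ) ^ X ω) P :=
  Integrable.of_bound (measurable_from_nat.comp hX).aestronglyMeasurable 1
    (Filter.Eventually.of_forall fun ω => by simp)

lemma integral_neg_one_pow_of_bernoulli {X : Ω → ℕ} (hX : Measurable X) (hX01 : ∀ ω, X ω ≤ 1)
    {p : ℝ} (hp : 0 ≤ p) (hX1 : P {ω | X ω = 1} = ENNReal.ofReal p) :
    ∫ ω, (-1 : ℝ) ^ X ω ∂P = 1 - 2 * p := by
  have hA : MeasurableSet {ω | X ω = 1} := hX (measurableSet_singleton 1)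
  have hsign : ∀ ω, (-1 : ℝ) ^ X ω = 1 - 2 * {ω | X ω = 1}.indicator 1 ω := by
    intro ω
    rcases Nat.le_one_iff_eq_zero_or_eq_one.mp (hX01 ω) with h | h <;> norm_num [h]
  simp_rw [hsign]
  rw [integral_sub (integrable_const 1) (((integrable_const 1).indicator hA).const_mul 2),
    integral_const_mul, integral_indicator_one hA, measureReal_def, hX1, ENNReal.toReal_ofReal hp]
  simp

theorem integral_neg_one_pow_sum_of_iIndepFun {Z : ι → Ω → ℕ} (hmeas : ∀ i, Measurable (Z i))
    (hind : iIndepFun Z P) (hval : ∀ i ω, Z i ω ≤ 1) {p : ℝ} (hp : 0 ≤ p)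
    (hber : ∀ i, P {ω | Z i ω = 1} = ENNReal.ofReal p) (S : Finset ι) :
    ∫ ω, (-1 : ℝ) ^ (∑ i ∈ S, Z i ω) ∂P = (1 - 2 * p) ^ #S := by
  simp_rw [← prod_pow_eq_pow_sum, ← prod_coe_sort S]
  rw [(hind.precomp Subtype.val_injective).integral_fun_prod_comp (f := fun _ n => (-1 : ℝ) ^ n)
    (fun i => (hmeas i).aemeasurable) (fun _ => measurable_from_nat.aestronglyMeasurable)]
  simp [integral_neg_one_pow_of_bernoulli (hmeas _) (hval _) hp (hber _)]

theorem integral_neg_one_pow_count_add_count {Z : ℕ → Ω → ℕ} (hmeas : ∀ i, Measurable (Z i))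
    (hind : iIndepFun Z P) (hval : ∀ i ω, Z i ω ≤ 1) {p : ℝ} (hp : 0 ≤ p)
    (hber : ∀ i, P {ω | Z i ω = 1} = ENNReal.ofReal p) (r k : ℕ) :
    ∫ ω, (-1 : ℝ) ^ (∑ i ∈ Icc 1 r, Z i ω + ∑ i ∈ Icc 1 k, Z i ω) ∂P = (1 - 2 * p) ^ r.dist k := by
  wlog hrk : r ≤ k generalizing r k
  · simp_rw [add_comm (∑ i ∈ Icc 1 r, _), Nat.dist_comm r]
    exact this k r (by omega)
  simp_rw [← sum_Icc_one_add_sum_Ioc _ hrk, neg_one_pow_add_add_self]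
  rw [integral_neg_one_pow_sum_of_iIndepFun hmeas hind hval hp hber, Nat.card_Ioc,
    Nat.dist_eq_sub_of_le hrk]

end SignsOfCounts

/-- Mean square displacement of the Bernoulli squirrel random walk:
`E[X_t²] = ((1-p)/p) t - ((1-2p)/(2p²)) (1-(1-2p)^t)`. -/
theorem stmt_7 {Ω : Type*} [MeasurableSpace Ω] (P : Measure Ω) [IsProbabilityMeasure P]
    (p : ℝ) (hp : p ∈ Set.Ioc (0:ℝ) 1) (σ0 : ℝ) (hσ0 : σ0 ∈ ({-1, 1} : Set ℝ))
    (Z : ℕ → Ω → ℕ)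
    (hmeas : ∀ i, Measurable (Z i))
    (hind : iIndepFun Z P)
    (hval : ∀ i ω, Z i ω ≤ 1)
    (hber : ∀ i, P {ω | Z i ω = 1} = ENNReal.ofReal p) :
    ∀ t : ℕ,
      ∫ ω, (σ0 * ∑ r ∈ Finset.Icc 1 t, (-1 : ℝ) ^ (∑ k ∈ Finset.Icc 1 r, Z k ω)) ^ 2 ∂P
        = ((1 - p) / p) * t - ((1 - 2 * p) / (2 * p ^ 2)) * (1 - (1 - 2 * p) ^ t) := by
  intro t
  have hσ : σ0 ^ 2 = 1 := by rcases hσ0 with rfl | rfl <;> norm_num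
  have hcount : ∀ r s, Measurable fun ω => ∑ k ∈ Icc 1 r, Z k ω + ∑ k ∈ Icc 1 s, Z k ω :=
    fun r s => by fun_prop
  calc ∫ ω, (σ0 * ∑ r ∈ Icc 1 t, (-1 : ℝ) ^ (∑ k ∈ Icc 1 r, Z k ω)) ^ 2 ∂P
      = ∫ ω, ∑ r ∈ Icc 1 t, ∑ s ∈ Icc 1 t,
          (-1 : ℝ) ^ (∑ k ∈ Icc 1 r, Z k ω + ∑ k ∈ Icc 1 s, Z k ω) ∂P := by
        simp_rw [mul_pow, hσ, one_mul, sq, sum_mul_sum, pow_add]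
    _ = ∑ r ∈ Icc 1 t, ∑ s ∈ Icc 1 t, (1 - 2 * p) ^ r.dist s := by
        rw [integral_finsetSum _ fun r _ => integrable_finsetSum _ fun s _ =>
          integrable_neg_one_pow (hcount r s)]
        refine sum_congr rfl fun r _ => ?_
        rw [integral_finsetSum _ fun s _ => integrable_neg_one_pow (hcount r s)]
        exact sum_congr rfl fun s _ =>
          integral_neg_one_pow_count_add_count hmeas hind hval hp.1.le hber r s
    _ = _ := by
        rw [sum_Icc_sum_Icc_pow_dist _ (by linarith [hp.1])]
        have hp0 : p ≠ 0 := hp.1.ne'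
        field_simp
        ring
end

section
/- The only waiting-time density ψ on {1,2,...} whose associated squirrel random walk satisfies ⟨X_t⟩ = 0 for all t is the symmetric Bernoulli one with generating function ψ̄(u) = u/(2(1-u/2)), i.e. ψ(t) = 2^{-t}. -/
/-! Clearing denominators, `X̄⁽¹⁾(u) = 0` is the linear equation `1 - ψ̄ = (1 - u)(1 + ψ̄)` in `ψ̄(u)`,
whose only solution is `ψ̄(u) = u / (2 - u)`, the geometric series `∑ (u/2)^(t+1)`. -/

lemma eq_div_of_unbiased {p u : ℝ} (hu : u ≠ 1) (hp : 1 + p ≠ 0)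
    (h : (1 - p) / ((1 - u) ^ 2 * (1 + p)) - 1 / (1 - u) = 0) :
    p = u / (2 * (1 - u / 2)) := by
  have hu' : 1 - u ≠ 0 := sub_ne_zero.mpr hu.symm
  have hlin : p * (2 - u) = u := by
    field_simp at h
    linear_combination -h
  have h2u : 2 * (1 - u / 2) ≠ 0 := by
    rintro h0
    have : u = 2 := by linarith
    subst this
    norm_num at hlin
  rw [eq_div_iff h2u]
  linear_combination hlin

lemma tsum_inv_two_pow_mul_pow_succ {u : ℝ} (hu : |u| < 2) :
    ∑' t : ℕ, ((2:ℝ) ^ (t + 1))⁻¹ * u ^ (t + 1) = u / (2 * (1 - u / 2)) := by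
  have hr : |u / 2| < 1 := by rw [abs_div, abs_two]; linarith
  have hr1 : 1 - u / 2 ≠ 0 := by linarith [(abs_lt.mp hu).2]
  calc ∑' t : ℕ, ((2:ℝ) ^ (t + 1))⁻¹ * u ^ (t + 1)
      = u / 2 * ∑' t : ℕ, (u / 2) ^ t := by
        rw [← tsum_mul_left]; exact tsum_congr fun t => by rw [div_pow]; field_simp; ring
    _ = u / (2 * (1 - u / 2)) := by
        rw [tsum_geometric_of_abs_lt_one hr]; field_simp

/-- The only waiting-time generating function making the squirrel random walk
unbiased (`⟨X_t⟩ = 0` for all `t`, i.e. `X̄⁽¹⁾(u) ≡ 0`) is the symmetric Bernoulli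
one, `ψ̄(u) = u/(2(1-u/2))`, whose coefficients are `ψ(t) = 2^{-t}`. -/
theorem stmt_12 :
    (∀ ψbar : ℝ → ℝ, (∀ u ∈ Set.Ico (0:ℝ) 1, 0 ≤ ψbar u) →
      (∀ u ∈ Set.Ico (0:ℝ) 1,
        (1 - ψbar u) / ((1 - u) ^ 2 * (1 + ψbar u)) - 1 / (1 - u) = 0) →
      ∀ u ∈ Set.Ico (0:ℝ) 1, ψbar u = u / (2 * (1 - u / 2))) ∧
    (∀ u ∈ Set.Ico (0:ℝ) 1,
      ∑' t : ℕ, ((2:ℝ) ^ (t + 1))⁻¹ * u ^ (t + 1) = u / (2 * (1 - u / 2))) := by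
  refine ⟨fun ψbar hpos hunbiased u hu => ?_, fun u hu => ?_⟩
  · exact eq_div_of_unbiased hu.2.ne (by linarith [hpos u hu]) (hunbiased u hu)
  · exact tsum_inv_two_pow_mul_pow_succ (by rw [abs_of_nonneg hu.1]; linarith [hu.2])
end

section
/- For the squirrel random walk driven by a renewal process with waiting-time generating function ψ̄, the generating function of the expected position satisfies Σ_{t=0}^∞ ⟨X_t⟩ u^t = σ̃₀·(1-ψ̄(u))/((1-u)²(1+ψ̄(u))) - σ̃₀/(1-u), where ⟨X_t⟩ = σ̃₀·Σ_{r=1}^t E[(-1)^{N(r)}]. -/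
/-!
Write `S_n = Δt_1 + ⋯ + Δt_n`. Since `S` is nondecreasing, `N(r)` counts exactly the `n ≥ 1`
with `S_n ≤ r`, and `(-1)^k = 1 - 2 Σ_{n=1}^k (-1)^{n-1}` turns the sign into a sum of
indicators: `E[(-1)^{N(r)}] = 1 - 2 Σ_{n ≥ 1} (-1)^{n-1} P(S_n ≤ r)`. Summing `u^r 1[S_n ≤ r]`
over `r` gives `u^{S_n}/(1-u)`, and independence gives `E[u^{S_n}] = ψ̄(u)^n`. As `S_n ≥ n`, the
double series converges absolutely, and the geometric series in `-ψ̄(u)` yields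
`Σ_r E[(-1)^{N(r)}] u^r = (1-ψ̄)/((1-u)(1+ψ̄))`. Passing to partial sums in `r` divides by `1-u`;
the missing term `r = 0` contributes `-σ̃₀/(1-u)`.
-/

open MeasureTheory ProbabilityTheory Finset

lemma sum_Icc_one_eq_sum_range {M : Type*} [AddCommMonoid M] (f : ℕ → M) (r : ℕ) :
    ∑ n ∈ Icc 1 r, f n = ∑ m ∈ range r, f (m + 1) := by
  rw [range_eq_Ico, sum_Ico_add' f 0 r 1, zero_add, Ico_add_one_right_eq_Icc]

lemma sum_Icc_neg_one_pow_pred (k : ℕ) :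
    ∑ n ∈ Icc 1 k, (-1 : ℝ) ^ (n - 1) = (1 - (-1) ^ k) / 2 := by
  rw [sum_Icc_one_eq_sum_range]
  induction k with
  | zero => simp
  | succ k ih =>
    rw [sum_range_succ, ih, Nat.add_sub_cancel, pow_succ]
    ring

lemma filter_Icc_one_eq_Icc_card {p : ℕ → Prop} [DecidablePred p]
    (hp : ∀ m n, m ≤ n → p n → p m) (r : ℕ) :
    (Icc 1 r).filter p = Icc 1 #((Icc 1 r).filter p) := by
  induction r with
  | zero => simp
  | succ r ih =>
    rw [← insert_Icc_right_eq_Icc_add_one (by omega), filter_insert]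
    by_cases h : p (r + 1)
    · rw [if_pos h, filter_true_of_mem fun n hn => hp n _ (by simp only [mem_Icc] at hn; omega) h,
        insert_Icc_right_eq_Icc_add_one (by omega)]
      simp
    · rwa [if_neg h]

lemma neg_one_pow_card_filter_Icc_one {p : ℕ → Prop} [DecidablePred p]
    (hp : ∀ m n, m ≤ n → p n → p m) (r : ℕ) :
    (-1 : ℝ) ^ #((Icc 1 r).filter p)
      = 1 - 2 * ∑ n ∈ Icc 1 r, if p n then (-1 : ℝ) ^ (n - 1) else 0 := by
  conv_rhs => rw [← sum_filter, filter_Icc_one_eq_Icc_card hp r, sum_Icc_neg_one_pow_pred]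
  ring

lemma hasSum_ite_le_pow {u : ℝ} (hu : |u| < 1) (s : ℕ) :
    HasSum (fun r => if s ≤ r then u ^ r else 0) (u ^ s / (1 - u)) := by
  rw [← hasSum_nat_add_iff' s, sum_eq_zero fun r hr => if_neg (by simpa using hr), sub_zero]
  simp_rw [if_pos (Nat.le_add_left s _), pow_add, mul_comm _ (u ^ s), div_eq_mul_inv]
  exact (hasSum_geometric_of_abs_lt_one hu).mul_left _

lemma hasSum_sum_range_of_abs_le_pow {u : ℝ} (hu : |u| < 1) {G : ℕ → ℕ → ℝ}
    (hG : ∀ m r, |G m r| ≤ |u| ^ r) (hG0 : ∀ m r, r ≤ m → G m r = 0) :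
    HasSum (fun r => ∑ m ∈ range r, G m r) (∑' m, ∑' r, G m r) := by
  have hu' : |(|u|)| < 1 := by rwa [abs_abs]
  have hdom : Summable (Function.uncurry fun m r : ℕ => if m + 1 ≤ r then |u| ^ r else 0) := by
    refine (summable_prod_of_nonneg fun ⟨m, r⟩ => by
      simp only [Function.uncurry_apply_pair, Pi.zero_apply]; split_ifs <;> positivity).2
      ⟨fun m => (hasSum_ite_le_pow hu' (m + 1)).summable, ?_⟩
    simp_rw [Function.uncurry_apply_pair, (hasSum_ite_le_pow hu' _).tsum_eq, pow_succ]
    exact ((summable_geometric_of_lt_one (abs_nonneg u) hu).mul_right _).div_const _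
  have hsum : Summable (Function.uncurry G) := by
    refine hdom.of_norm_bounded fun ⟨m, r⟩ => ?_
    simp only [Function.uncurry_apply_pair, Real.norm_eq_abs]
    split_ifs with h
    · exact hG m r
    · rw [hG0 m r (by omega), abs_zero]
  have hcol : ∀ r, ∑' m, G m r = ∑ m ∈ range r, G m r := fun r =>
    tsum_eq_sum fun m hm => hG0 m r (by simpa using hm)
  rw [← hsum.tsum_comm]
  simp_rw [← hcol]
  exact hsum.prod_symm.prod.hasSum

lemma hasSum_sum_range_mul_pow {u : ℝ} (hu : |u| < 1) {a : ℕ → ℝ} {A : ℝ}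
    (ha : HasSum (fun r => a r * u ^ r) A) (ha_le : ∀ r, |a r| ≤ 1) :
    HasSum (fun t => (∑ r ∈ range (t + 1), a r) * u ^ t) (A / (1 - u)) := by
  have hgeom : Summable fun r => ‖u ^ r‖ := by
    simpa [norm_pow] using summable_geometric_of_lt_one (abs_nonneg u) hu
  have hnorm : Summable fun r => ‖a r * u ^ r‖ :=
    hgeom.of_nonneg_of_le (fun _ => norm_nonneg _) fun r => by
      rw [norm_mul]; exact mul_le_of_le_one_left (norm_nonneg _) (ha_le r)
  have h := hasSum_sum_range_mul_of_summable_norm hnorm hgeom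
  rw [ha.tsum_eq, tsum_geometric_of_abs_lt_one hu, ← div_eq_mul_inv] at h
  refine h.congr_fun fun t => ?_
  rw [sum_mul]
  refine sum_congr rfl fun r hr => ?_
  rw [mul_assoc, ← pow_add, Nat.add_sub_cancel' (by simpa [Nat.lt_succ_iff] using hr)]

section NatValued

variable {Ω : Type*} [MeasurableSpace Ω] {P : Measure Ω}

lemma abs_integral_pow_le [IsProbabilityMeasure P] {X : Ω → ℕ} {k : ℕ} (hk : ∀ ω, k ≤ X ω)
    {u : ℝ} (hu : |u| ≤ 1) : |∫ ω, u ^ X ω ∂P| ≤ |u| ^ k := by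
  have h := norm_integral_le_of_norm_le_const (μ := P) (f := fun ω => u ^ X ω) (C := |u| ^ k)
    (ae_of_all _ fun ω => by
      rw [norm_pow, Real.norm_eq_abs]; exact pow_le_pow_of_le_one (abs_nonneg u) hu (hk ω))
  simpa using h

lemma integral_pow_eq_tsum [IsFiniteMeasure P] {X : Ω → ℕ} (hX : Measurable X) {ψ : ℕ → ℝ}
    (hψ : ∀ k, 0 ≤ ψ k) (hlaw : ∀ k, P {ω | X ω = k} = ENNReal.ofReal (ψ k))
    {u : ℝ} (hu : |u| ≤ 1) : ∫ ω, u ^ X ω ∂P = ∑' k, ψ k * u ^ k := by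
  have hint : Integrable (fun k : ℕ => u ^ k) (P.map X) :=
    (integrable_const (1 : ℝ)).mono' measurable_from_nat.aestronglyMeasurable
      (ae_of_all _ fun k => by rw [norm_pow, Real.norm_eq_abs]; exact pow_le_one₀ (abs_nonneg u) hu)
  rw [← integral_map hX.aemeasurable measurable_from_nat.aestronglyMeasurable,
    integral_countable hint]
  refine tsum_congr fun k => ?_
  rw [measureReal_def, Measure.map_apply hX (measurableSet_singleton k), smul_eq_mul]
  simp [Set.preimage, hlaw, hψ]

lemma hasSum_pow_mul_measureReal_le [IsFiniteMeasure P] {X : Ω → ℕ} (hX : Measurable X)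
    {u : ℝ} (hu : |u| < 1) :
    HasSum (fun r => u ^ r * P.real {ω | X ω ≤ r}) ((∫ ω, u ^ X ω ∂P) / (1 - u)) := by
  set F : ℕ → Ω → ℝ := fun r => {ω | X ω ≤ r}.indicator fun _ => u ^ r
  have hF : ∀ r, MeasurableSet {ω | X ω ≤ r} := fun r => measurableSet_le hX measurable_const
  have hint : ∀ r, ∫ ω, F r ω ∂P = u ^ r * P.real {ω | X ω ≤ r} := fun r => by
    rw [integral_indicator_const _ (hF r), smul_eq_mul, mul_comm]
  have hnorm : Summable fun r => ∫ ω, ‖F r ω‖ ∂P := by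
    refine ((summable_geometric_of_lt_one (abs_nonneg u) hu).mul_right (P.real Set.univ)
      ).of_nonneg_of_le (fun r => integral_nonneg fun _ => norm_nonneg _) fun r => ?_
    simp_rw [F, norm_indicator_eq_indicator_norm, norm_pow, Real.norm_eq_abs]
    rw [integral_indicator_const _ (hF r), smul_eq_mul, mul_comm]
    exact mul_le_mul_of_nonneg_left (measureReal_mono (Set.subset_univ _)) (by positivity)
  have h := hasSum_integral_of_summable_integral_norm
    (fun r => (integrable_const _).indicator (hF r)) hnorm
  simp_rw [hint] at h
  have hpoint : ∀ ω, ∑' r, F r ω = u ^ X ω / (1 - u) := fun ω => by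
    simpa only [F, Set.indicator_apply, Set.mem_ofPred_eq] using
      (hasSum_ite_le_pow hu (X ω)).tsum_eq
  rwa [integral_congr_ae (ae_of_all _ hpoint), integral_div] at h

end NatValued

section Renewal

variable {Ω : Type*}

def renewalEpoch (Δt : ℕ → Ω → ℕ) (n : ℕ) (ω : Ω) : ℕ := ∑ j ∈ Icc 1 n, Δt j ω

def renewalCount (Δt : ℕ → Ω → ℕ) (r : ℕ) (ω : Ω) : ℕ :=
  #((Icc 1 r).filter fun n => renewalEpoch Δt n ω ≤ r)

variable {Δt : ℕ → Ω → ℕ}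

@[simp] lemma renewalEpoch_zero (ω : Ω) : renewalEpoch Δt 0 ω = 0 := by
  simp [renewalEpoch]

lemma renewalEpoch_succ (n : ℕ) (ω : Ω) :
    renewalEpoch Δt (n + 1) ω = renewalEpoch Δt n ω + Δt (n + 1) ω :=
  sum_Icc_succ_top (by omega) _

lemma renewalEpoch_mono (ω : Ω) : Monotone (renewalEpoch Δt · ω) := fun _ _ h =>
  sum_le_sum_of_subset (Icc_subset_Icc_right h)

lemma le_renewalEpoch (hpos : ∀ j ω, 1 ≤ Δt j ω) (n : ℕ) (ω : Ω) : n ≤ renewalEpoch Δt n ω := by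
  simpa [renewalEpoch] using card_nsmul_le_sum (Icc 1 n) (Δt · ω) 1 fun j _ => hpos j ω

@[simp] lemma renewalCount_zero (ω : Ω) : renewalCount Δt 0 ω = 0 := by
  simp [renewalCount]

lemma neg_one_pow_renewalCount (r : ℕ) (ω : Ω) :
    (-1 : ℝ) ^ renewalCount Δt r ω = 1 - 2 * ∑ n ∈ Icc 1 r,
      {ω | renewalEpoch Δt n ω ≤ r}.indicator (fun _ => (-1 : ℝ) ^ (n - 1)) ω := by
  simp only [Set.indicator_apply, Set.mem_ofPred_eq]
  exact neg_one_pow_card_filter_Icc_one (fun m n hmn h => (renewalEpoch_mono ω hmn).trans h) r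

variable [MeasurableSpace Ω] {P : Measure Ω}

lemma measurable_renewalEpoch (hmeas : ∀ j, Measurable (Δt j)) (n : ℕ) :
    Measurable (renewalEpoch Δt n) :=
  Finset.measurable_fun_sum _ fun j _ => hmeas j

lemma integral_neg_one_pow_renewalCount [IsProbabilityMeasure P]
    (hmeas : ∀ j, Measurable (Δt j)) (r : ℕ) :
    ∫ ω, (-1 : ℝ) ^ renewalCount Δt r ω ∂P
      = 1 - 2 * ∑ n ∈ Icc 1 r, (-1) ^ (n - 1) * P.real {ω | renewalEpoch Δt n ω ≤ r} := by
  have hset : ∀ n, MeasurableSet {ω | renewalEpoch Δt n ω ≤ r} := fun n =>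
    measurableSet_le (measurable_renewalEpoch hmeas n) measurable_const
  simp_rw [neg_one_pow_renewalCount]
  rw [integral_sub (integrable_const _) ((integrable_finsetSum _ fun n _ =>
      (integrable_const _).indicator (hset n)).const_mul _),
    integral_const_mul, integral_finsetSum _ fun n _ => (integrable_const _).indicator (hset n)]
  simp [integral_indicator_const _ (hset _), mul_comm]

lemma integral_pow_renewalEpoch [IsProbabilityMeasure P] (hmeas : ∀ j, Measurable (Δt j))
    (hind : iIndepFun Δt P) {u φ : ℝ} (hφ : ∀ j, ∫ ω, u ^ Δt j ω ∂P = φ) (n : ℕ) :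
    ∫ ω, u ^ renewalEpoch Δt n ω ∂P = φ ^ n := by
  induction n with
  | zero => simp
  | succ n ih =>
    have hindep : IndepFun (renewalEpoch Δt n) (Δt (n + 1)) P := by
      have h := hind.indepFun_finsetSum_of_notMem hmeas (s := Icc 1 n) (i := n + 1) (by simp)
      rwa [show ∑ j ∈ Icc 1 n, Δt j = renewalEpoch Δt n from
        funext fun ω => sum_apply ω _ _] at h
    simp_rw [renewalEpoch_succ, pow_add]
    rw [hindep.integral_fun_comp_mul_comp (f := (u ^ ·)) (g := (u ^ ·))
      (measurable_renewalEpoch hmeas n).aemeasurable (hmeas _).aemeasurable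
      measurable_from_nat.aestronglyMeasurable measurable_from_nat.aestronglyMeasurable,
      ih, hφ, pow_one]

lemma hasSum_integral_neg_one_pow_renewalCount_mul_pow [IsProbabilityMeasure P]
    (hmeas : ∀ j, Measurable (Δt j)) (hind : iIndepFun Δt P) (hpos : ∀ j ω, 1 ≤ Δt j ω)
    {u φ : ℝ} (hu : |u| < 1) (hφ : ∀ j, ∫ ω, u ^ Δt j ω ∂P = φ) :
    HasSum (fun r => (∫ ω, (-1 : ℝ) ^ renewalCount Δt r ω ∂P) * u ^ r)
      ((1 - φ) / ((1 - u) * (1 + φ))) := by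
  have hφ_lt : |φ| < 1 := (hφ 1 ▸ abs_integral_pow_le (hpos 1) hu.le).trans_lt (by simpa using hu)
  have h1φ : 1 + φ ≠ 0 := by linarith [neg_abs_le φ]
  have h1u : 1 - u ≠ 0 := by linarith [le_abs_self u]
  set G : ℕ → ℕ → ℝ := fun m r => (-1) ^ m * (u ^ r * P.real {ω | renewalEpoch Δt (m + 1) ω ≤ r})
  have hG_le : ∀ m r, |G m r| ≤ |u| ^ r := fun m r => by
    simp only [G, abs_mul, abs_pow, abs_neg, abs_one, one_pow, one_mul,
      abs_of_nonneg measureReal_nonneg]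
    exact mul_le_of_le_one_right (by positivity) measureReal_le_one
  have hG_zero : ∀ m r, r ≤ m → G m r = 0 := fun m r hrm => by
    have : {ω | renewalEpoch Δt (m + 1) ω ≤ r} = ∅ :=
      Set.eq_empty_of_forall_notMem fun ω h => by
        have := le_renewalEpoch hpos (m + 1) ω; simp only [Set.mem_ofPred_eq] at h; omega
    simp [G, this]
  have hrow : HasSum (fun m => ∑' r, G m r) (φ / ((1 - u) * (1 + φ))) := by
    have h : ∀ m, ∑' r, G m r = (-φ) ^ m * (φ / (1 - u)) := fun m => by
      rw [tsum_mul_left,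
        (hasSum_pow_mul_measureReal_le (measurable_renewalEpoch hmeas _) hu).tsum_eq,
        integral_pow_renewalEpoch hmeas hind hφ, neg_pow, pow_succ]
      ring
    simp_rw [h]
    have h2 := (hasSum_geometric_of_abs_lt_one (r := -φ) (by rwa [abs_neg])).mul_right (φ / (1 - u))
    rwa [show (1 - -φ)⁻¹ * (φ / (1 - u)) = φ / ((1 - u) * (1 + φ)) by
      rw [sub_neg_eq_add]; field_simp] at h2
  have hcol : ∀ r, (∫ ω, (-1 : ℝ) ^ renewalCount Δt r ω ∂P) * u ^ r
      = u ^ r - 2 * ∑ m ∈ range r, G m r := fun r => by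
    rw [integral_neg_one_pow_renewalCount hmeas, sum_Icc_one_eq_sum_range]
    simp only [G, Nat.add_sub_cancel, mul_left_comm _ (u ^ r), ← mul_sum]
    ring
  have h := (hasSum_geometric_of_abs_lt_one hu).sub
    ((hasSum_sum_range_of_abs_le_pow hu hG_le hG_zero).mul_left 2)
  rw [hrow.tsum_eq, show (1 - u)⁻¹ - 2 * (φ / ((1 - u) * (1 + φ)))
      = (1 - φ) / ((1 - u) * (1 + φ)) by field_simp; ring] at h
  simpa only [hcol] using h

end Renewal

theorem stmt_13_general {Ω : Type*} [MeasurableSpace Ω] (P : Measure Ω) [IsProbabilityMeasure P]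
    (ψ : ℕ → ℝ) (hψnn : ∀ k, 0 ≤ ψ k)
    (Δt : ℕ → Ω → ℕ) (hmeas : ∀ j, Measurable (Δt j))
    (hind : iIndepFun Δt P)
    (hpos : ∀ j ω, 1 ≤ Δt j ω)
    (hdist : ∀ j k, P {ω | Δt j ω = k} = ENNReal.ofReal (ψ k))
    (N : ℕ → Ω → ℕ)
    (hN : ∀ t ω, N t ω = ((Finset.Icc 1 t).filter
        (fun n => (∑ j ∈ Finset.Icc 1 n, Δt j ω) ≤ t)).card)
    (σ0 : ℝ) :
    ∀ u : ℝ, |u| < 1 →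
      ∑' t : ℕ,
          (σ0 * ∑ r ∈ Finset.Icc 1 t, ∫ ω, (-1 : ℝ) ^ (N r ω) ∂P) * u ^ t
        = σ0 * (1 - ∑' k, ψ k * u ^ k) /
            ((1 - u) ^ 2 * (1 + ∑' k, ψ k * u ^ k)) - σ0 / (1 - u) := by
  intro u hu
  obtain rfl : N = renewalCount Δt := funext fun t => funext (hN t)
  set a : ℕ → ℝ := fun r => ∫ ω, (-1 : ℝ) ^ renewalCount Δt r ω ∂P
  have ha_le : ∀ r, |a r| ≤ 1 := fun r => by
    simpa using abs_integral_pow_le (P := P) (k := 0) (fun _ => Nat.zero_le _) (u := -1) (by simp)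
  have ha0 : a 0 = 1 := by simp [a]
  have hA := hasSum_integral_neg_one_pow_renewalCount_mul_pow hmeas hind hpos hu
    fun j => integral_pow_eq_tsum (hmeas j) hψnn (hdist j) hu.le
  have hB := ((hasSum_sum_range_mul_pow hu hA ha_le).sub
    (hasSum_geometric_of_abs_lt_one hu)).mul_left σ0
  have hterm : ∀ t, (σ0 * ∑ r ∈ Icc 1 t, a r) * u ^ t
      = σ0 * ((∑ r ∈ range (t + 1), a r) * u ^ t - u ^ t) := fun t => by
    rw [sum_range_succ', ← sum_Icc_one_eq_sum_range, ha0]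
    ring
  rw [tsum_congr hterm, hB.tsum_eq]
  -- keeps `ring` from expanding the inverses of products of sums
  generalize 1 - u = v
  generalize 1 + ∑' k, ψ k * u ^ k = w
  ring

/-- Generating function of the expected position of the squirrel random walk:
`Σ_t ⟨X_t⟩ u^t = σ̃₀ (1-ψ̄(u))/((1-u)²(1+ψ̄(u))) - σ̃₀/(1-u)`, where
`⟨X_t⟩ = σ̃₀ Σ_{r=1}^t E[(-1)^{N(r)}]` and `N` is the renewal process with
i.i.d. waiting times of density `ψ` on `{1,2,...}`. -/
theorem stmt_13 {Ω : Type*} [MeasurableSpace Ω] (P : Measure Ω) [IsProbabilityMeasure P]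
    (ψ : ℕ → ℝ) (hψ0 : ψ 0 = 0) (hψnn : ∀ k, 0 ≤ ψ k) (hψsum : ∑' k, ψ k = 1)
    (Δt : ℕ → Ω → ℕ) (hmeas : ∀ j, Measurable (Δt j))
    (hind : iIndepFun Δt P)
    (hpos : ∀ j ω, 1 ≤ Δt j ω)
    (hdist : ∀ j k, P {ω | Δt j ω = k} = ENNReal.ofReal (ψ k))
    (N : ℕ → Ω → ℕ)
    (hN : ∀ t ω, N t ω = ((Finset.Icc 1 t).filter
        (fun n => (∑ j ∈ Finset.Icc 1 n, Δt j ω) ≤ t)).card)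
    (σ0 : ℝ) (hσ0 : σ0 ∈ ({-1, 1} : Set ℝ)) :
    ∀ u : ℝ, |u| < 1 →
      ∑' t : ℕ,
          (σ0 * ∑ r ∈ Finset.Icc 1 t, ∫ ω, (-1 : ℝ) ^ (N r ω) ∂P) * u ^ t
        = σ0 * (1 - ∑' k, ψ k * u ^ k) /
            ((1 - u) ^ 2 * (1 + ∑' k, ψ k * u ^ k)) - σ0 / (1 - u) :=
  stmt_13_general P ψ hψnn Δt hmeas hind hpos hdist N hN σ0
end
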